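/- arXiv:2302.13828 — 2 statements merged into one kernel-verified Lean document; each statement's English description precedes it below -/
import Mathlib

section
/- Let $m : [0,1]^D \to \mathbb{R}$ be additive, $m(x) = \sum_{d=1}^D m_d(x_d)$ with each $m_d$ continuous, let $g$ be continuously differentiable on an interval containing the image of $m$ with $g'(z) \ge M' > 0$, and set $p = g \circ m$. Fix $d$ and a box $\mathcal{A} = \prod_{j=1}^D [\gamma_1^{(j)}, \gamma_2^{(j)}]$ with $\gamma_1^{(j)} < \gamma_2^{(j)}$. If the function $\psi_d(t) = \int_{\prod_{j \ne d}[\gamma_1^{(j)},\gamma_2^{(j)}]} p(x_1,\dots,x_{d-1},t,x_{d+1},\dots,x_D)\,\prod_{j\ne d} dx_j$ is constant in $t$ on $[\gamma_1^{(d)},\gamma_2^{(d)}]$, then $m_d$ is constant on $[\gamma_1^{(d)},\gamma_2^{(d)}]$. -/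
open MeasureTheory Set Function

/-!
Moving the `d`-th coordinate of `x` from `t₂` to `t₁` shifts the additive `m x` by
`m_d t₁ - m_d t₂`, whatever the other coordinates are. Since `g' ≥ M'`, the integrand of the
marginal therefore increases by at least `M' (m_d t₁ - m_d t₂)` at every point of the box, and
so the marginal by at least that much times the (positive) volume of the box. A constant
marginal thus forces `m_d t₁ = m_d t₂`.
-/

theorem Finset.sum_apply_update_sub {ι α G : Type*} [Fintype ι] [DecidableEq ι] [AddCommGroup G]
    (f : ι → α → G) (x : ι → α) (i : ι) (a b : α) :
    ∑ j, f j (update x i a j) - ∑ j, f j (update x i b j) = f i a - f i b := by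
  simp only [apply_update f, Finset.sum_update_of_mem (Finset.mem_univ i)]
  abel

theorem Set.update_mem_Icc {ι α : Type*} [DecidableEq ι] [Preorder α] {a b x : ι → α}
    (hx : x ∈ Icc a b) {i : ι} {t : α} (ht : t ∈ Icc (a i) (b i)) : update x i t ∈ Icc a b := by
  rw [← pi_univ_Icc] at hx ⊢
  exact (update_mem_pi_iff_of_mem hx).2 fun _ => ht

theorem Convex.mul_sub_le_sub_of_hasDerivAt {K : Set ℝ} (hK : Convex ℝ K) {g g' : ℝ → ℝ}
    {C : ℝ} (hg : ∀ z ∈ K, HasDerivAt g (g' z) z) (hC : ∀ z ∈ K, C ≤ g' z)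
    {u v : ℝ} (hu : u ∈ K) (hv : v ∈ K) (huv : u ≤ v) : C * (v - u) ≤ g v - g u :=
  hK.mul_sub_le_image_sub_of_le_deriv (fun z hz => (hg z hz).continuousAt.continuousWithinAt)
    (fun z hz => (hg z (interior_subset hz)).differentiableAt.differentiableWithinAt)
    (fun z hz => (hg z (interior_subset hz)).deriv ▸ hC z (interior_subset hz)) u hu v hv huv

section AdditiveComposite

variable {ι : Type*} [Fintype ι] [DecidableEq ι] {md : ι → ℝ → ℝ} {g : ℝ → ℝ} {K : Set ℝ}
  {a b : ι → ℝ}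

theorem integrableOn_comp_sum_update (hmd : ∀ j, Continuous (md j)) (hg : ContinuousOn g K)
    (hmK : ∀ x ∈ Icc a b, ∑ j, md j (x j) ∈ K) {i : ι} {t : ℝ} (ht : t ∈ Icc (a i) (b i)) :
    IntegrableOn (fun x => g (∑ j, md j (update x i t j))) (Icc a b) := by
  have hcont : Continuous fun x : ι → ℝ => ∑ j, md j (update x i t j) :=
    continuous_finsetSum _ fun j _ =>
      (hmd j).comp ((continuous_apply j).comp (continuous_id.update i continuous_const))
  exact (hg.comp hcont.continuousOn fun x hx => hmK _ (update_mem_Icc hx ht)).integrableOn_compact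
    isCompact_Icc

theorem mul_sub_mul_volume_le_setIntegral_update_sub (hmd : ∀ j, Continuous (md j))
    (hK : Convex ℝ K) {g' : ℝ → ℝ} {C : ℝ} (hg : ∀ z ∈ K, HasDerivAt g (g' z) z)
    (hC : ∀ z ∈ K, C ≤ g' z) (hmK : ∀ x ∈ Icc a b, ∑ j, md j (x j) ∈ K) {i : ι} {t₁ t₂ : ℝ}
    (ht₁ : t₁ ∈ Icc (a i) (b i)) (ht₂ : t₂ ∈ Icc (a i) (b i)) (hle : md i t₂ ≤ md i t₁) :
    C * (md i t₁ - md i t₂) * volume.real (Icc a b) ≤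
      (∫ x in Icc a b, g (∑ j, md j (update x i t₁ j))) -
        ∫ x in Icc a b, g (∑ j, md j (update x i t₂ j)) := by
  have hgc : ContinuousOn g K := fun z hz => (hg z hz).continuousAt.continuousWithinAt
  have hint₁ := integrableOn_comp_sum_update hmd hgc hmK ht₁
  have hint₂ := integrableOn_comp_sum_update hmd hgc hmK ht₂
  rw [← integral_sub hint₁ hint₂]
  refine setIntegral_ge_of_const_le_real measurableSet_Icc measure_Icc_lt_top.ne
    (fun x hx => ?_) (hint₁.sub hint₂)
  have hshift := Finset.sum_apply_update_sub md x i t₁ t₂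
  have hincr := hK.mul_sub_le_sub_of_hasDerivAt hg hC (hmK _ (update_mem_Icc hx ht₂))
    (hmK _ (update_mem_Icc hx ht₁)) (by linarith)
  rwa [hshift] at hincr

end AdditiveComposite

theorem additive_component_constant_of_marginal_constant_general
    (D : ℕ) (d : Fin D)
    (md : Fin D → ℝ → ℝ) (hmd : ∀ j, Continuous (md j))
    (m : (Fin D → ℝ) → ℝ) (hm : ∀ x, m x = ∑ j, md j (x j))
    (M : ℝ) (hM : ∀ x ∈ Set.Icc (0 : Fin D → ℝ) 1, m x ∈ Set.Icc (-M) M)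
    (g : ℝ → ℝ) (M' : ℝ) (hM' : 0 < M')
    (hgderiv : ∀ z ∈ Set.Icc (-M) M, HasDerivAt g (deriv g z) z)
    (hglb : ∀ z ∈ Set.Icc (-M) M, M' ≤ deriv g z)
    (p : (Fin D → ℝ) → ℝ) (hp : ∀ x, p x = g (m x))
    (γ₁ γ₂ : Fin D → ℝ)
    (hbox : ∀ j, 0 ≤ γ₁ j ∧ γ₁ j < γ₂ j ∧ γ₂ j ≤ 1)
    (ψ : ℝ → ℝ)
    (hψ : ∀ t, ψ t =
      ∫ x in Set.univ.pi (fun j => Set.Icc (γ₁ j) (γ₂ j)),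
        p (Function.update x d t) ∂(volume : Measure (Fin D → ℝ)))
    (hconst : ∀ t₁ ∈ Set.Icc (γ₁ d) (γ₂ d), ∀ t₂ ∈ Set.Icc (γ₁ d) (γ₂ d),
      ψ t₁ = ψ t₂) :
    ∀ t₁ ∈ Set.Icc (γ₁ d) (γ₂ d), ∀ t₂ ∈ Set.Icc (γ₁ d) (γ₂ d),
      md d t₁ = md d t₂ := by
  intro t₁ ht₁ t₂ ht₂
  wlog hle : md d t₂ ≤ md d t₁ generalizing t₁ t₂
  · exact (this t₂ ht₂ t₁ ht₁ (le_of_not_ge hle)).symm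
  have hψ_eq : ∀ t, ψ t = ∫ x in Icc γ₁ γ₂, g (∑ j, md j (update x d t j)) := fun t => by
    simp only [hψ, hp, hm, pi_univ_Icc]
  have hbox_sub : Icc γ₁ γ₂ ⊆ Icc 0 1 :=
    Icc_subset_Icc (fun j => (hbox j).1) (fun j => (hbox j).2.2)
  have hvol : 0 < volume.real (Icc γ₁ γ₂) := by
    rw [measureReal_def, Real.volume_Icc_pi_toReal fun j => (hbox j).2.1.le]
    exact Finset.prod_pos fun j _ => sub_pos.2 (hbox j).2.1
  have hincr : M' * (md d t₁ - md d t₂) * volume.real (Icc γ₁ γ₂) ≤ ψ t₁ - ψ t₂ := by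
    rw [hψ_eq, hψ_eq]
    exact mul_sub_mul_volume_le_setIntegral_update_sub hmd (convex_Icc (-M) M) hgderiv hglb
      (fun x hx => hm x ▸ hM x (hbox_sub hx)) ht₁ ht₂ hle
  rw [hconst t₁ ht₁ t₂ ht₂, sub_self] at hincr
  nlinarith [mul_pos hM' hvol]

theorem additive_component_constant_of_marginal_constant
    (D : ℕ) (d : Fin D)
    (md : Fin D → ℝ → ℝ) (hmd : ∀ j, Continuous (md j))
    (m : (Fin D → ℝ) → ℝ) (hm : ∀ x, m x = ∑ j, md j (x j))
    (M : ℝ) (hM : ∀ x ∈ Set.Icc (0 : Fin D → ℝ) 1, m x ∈ Set.Icc (-M) M)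
    (g : ℝ → ℝ) (M' : ℝ) (hM' : 0 < M')
    (hgderiv : ∀ z ∈ Set.Icc (-M) M, HasDerivAt g (deriv g z) z)
    (hgcont : ContinuousOn (deriv g) (Set.Icc (-M) M))
    (hglb : ∀ z ∈ Set.Icc (-M) M, M' ≤ deriv g z)
    (p : (Fin D → ℝ) → ℝ) (hp : ∀ x, p x = g (m x))
    (γ₁ γ₂ : Fin D → ℝ)
    (hbox : ∀ j, 0 ≤ γ₁ j ∧ γ₁ j < γ₂ j ∧ γ₂ j ≤ 1)
    (ψ : ℝ → ℝ)
    (hψ : ∀ t, ψ t =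
      ∫ x in Set.univ.pi (fun j => Set.Icc (γ₁ j) (γ₂ j)),
        p (Function.update x d t) ∂(volume : Measure (Fin D → ℝ)))
    (hconst : ∀ t₁ ∈ Set.Icc (γ₁ d) (γ₂ d), ∀ t₂ ∈ Set.Icc (γ₁ d) (γ₂ d),
      ψ t₁ = ψ t₂) :
    ∀ t₁ ∈ Set.Icc (γ₁ d) (γ₂ d), ∀ t₂ ∈ Set.Icc (γ₁ d) (γ₂ d),
      md d t₁ = md d t₂ :=
  additive_component_constant_of_marginal_constant_general D d md hmd m hm M hM g M' hM' hgderiv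
    hglb p hp γ₁ γ₂ hbox ψ hψ hconst
end

section
/- Let $Q \in \mathbb{R}^{n \times n}$ be symmetric positive definite and strictly diagonally dominant with $Q_{ii} - \sum_{j\ne i}|Q_{ij}| \ge \xi > 0$, let $Z \in \{0,1\}^{n\times K}$ be a membership matrix (each row has exactly one entry equal to 1) with every column nonzero, and let $y \in [0,1]^n$. Then the GLS estimate $\hat\beta = (Z^\top Q Z)^{-1} Z^\top Q y$ satisfies $\|\hat\beta\|_\infty \le \frac{\max_i \sum_j |Q_{ij}|}{\xi}$. -/
/-! Write `Z` as the membership matrix of a leaf map `c`, so that the normal equations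
`ZᵀQZ β = ZᵀQ y` say that `Q (β ∘ c)` and `Q y` have the same sum over every leaf.
Take a leaf `k₀` where `|β|` is maximal. On the rows of that leaf `β ∘ c` attains its sup norm,
so strict diagonal dominance gives `β k₀ * (Q (β ∘ c)) i ≥ ξ β k₀²`, while `|y| ≤ 1` gives
`β k₀ * (Q y) i ≤ |β k₀| ∑ⱼ |Q i j|`. Summing over the leaf yields `ξ |β k₀| ≤ maxᵢ ∑ⱼ |Q i j|`. -/

open Finset Matrix

section Membership

variable {ι κ : Type*} [DecidableEq κ]

def membershipMatrix (R : Type*) [Zero R] [One R] (c : ι → κ) : Matrix ι κ R :=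
  Matrix.of fun i k => if c i = k then 1 else 0

theorem exists_eq_membershipMatrix {R : Type*} [MulZeroOneClass R] [NeZero (1 : R)]
    {Z : Matrix ι κ R}
    (h01 : ∀ i k, Z i k = 0 ∨ Z i k = 1) (hrow : ∀ i, ∃! k, Z i k = 1) :
    ∃ c : ι → κ, Z = membershipMatrix R c := by
  choose c hc hc_unique using hrow
  refine ⟨c, Matrix.ext fun i k => ?_⟩
  by_cases hk : c i = k
  · subst hk
    simp [membershipMatrix, hc]
  · simp only [membershipMatrix, of_apply, hk, if_false]
    exact (h01 i k).resolve_right fun h => hk (hc_unique i k h).symm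

variable {R : Type*} [NonAssocSemiring R]

theorem membershipMatrix_mulVec [Fintype κ] (c : ι → κ) (x : κ → R) :
    membershipMatrix R c *ᵥ x = x ∘ c := by
  ext i
  simp [membershipMatrix, mulVec, dotProduct]

theorem membershipMatrix_transpose_mulVec_apply [Fintype ι] (c : ι → κ) (w : ι → R)
    (k : κ) :
    ((membershipMatrix R c)ᵀ *ᵥ w) k = ∑ i ∈ univ.filter (c · = k), w i := by
  simp [membershipMatrix, mulVec, dotProduct, sum_filter]

theorem membershipMatrix_mulVec_injective [Fintype κ] {c : ι → κ}
    (hc : Function.Surjective c) : Function.Injective (membershipMatrix R c).mulVec := by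
  intro x x' h
  rw [membershipMatrix_mulVec, membershipMatrix_mulVec] at h
  exact hc.injective_comp_right h

end Membership

theorem mul_mulVec_apply_ge_of_diag_dominant {ι : Type*} [Fintype ι] [DecidableEq ι]
    {Q : Matrix ι ι ℝ} {ξ : ℝ} {i : ι}
    (hdd : ξ ≤ Q i i - ∑ j ∈ univ.erase i, |Q i j|) {v : ι → ℝ} (hv : ∀ j, |v j| ≤ |v i|) :
    ξ * v i ^ 2 ≤ v i * (Q *ᵥ v) i := by
  have hoff : -(∑ j ∈ univ.erase i, |Q i j|) * v i ^ 2 ≤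
      ∑ j ∈ univ.erase i, v i * (Q i j * v j) := by
    rw [neg_mul, sum_mul, ← sum_neg_distrib]
    refine sum_le_sum fun j _ => neg_le_of_abs_le ?_
    calc |v i * (Q i j * v j)| = |Q i j| * (|v j| * |v i|) := by
          simp only [abs_mul]; ring
      _ ≤ |Q i j| * (|v i| * |v i|) := by have := hv j; gcongr
      _ = |Q i j| * v i ^ 2 := by rw [← abs_mul, ← sq, abs_sq]
  calc ξ * v i ^ 2 ≤ (Q i i - ∑ j ∈ univ.erase i, |Q i j|) * v i ^ 2 := by gcongr
    _ ≤ v i * (Q i i * v i) + ∑ j ∈ univ.erase i, v i * (Q i j * v j) := by linarith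
    _ = v i * (Q *ᵥ v) i := by
      rw [mulVec, dotProduct, ← add_sum_erase _ _ (mem_univ i), mul_add, mul_sum]

theorem abs_mulVec_apply_le_sum_abs {m n : Type*} [Fintype n] (Q : Matrix m n ℝ) {y : n → ℝ}
    (hy : ∀ j, |y j| ≤ 1) (i : m) : |(Q *ᵥ y) i| ≤ ∑ j, |Q i j| :=
  calc |(Q *ᵥ y) i| ≤ ∑ j, |Q i j * y j| := abs_sum_le_sum_abs _ _
    _ ≤ ∑ j, |Q i j| := sum_le_sum fun j _ => by
      rw [abs_mul]; exact mul_le_of_le_one_right (abs_nonneg _) (hy j)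

theorem abs_le_div_of_membershipMatrix_normal_eq {ι κ : Type*} [Fintype ι] [DecidableEq ι]
    [Fintype κ] [DecidableEq κ] {Q : Matrix ι ι ℝ} {ξ M : ℝ} (hξ : 0 < ξ)
    (hdd : ∀ i, ξ ≤ Q i i - ∑ j ∈ univ.erase i, |Q i j|) (hM : ∀ i, ∑ j, |Q i j| ≤ M)
    {c : ι → κ} (hc : Function.Surjective c) {y : ι → ℝ} (hy : ∀ i, |y i| ≤ 1) {β : κ → ℝ}
    (hnormal : ((membershipMatrix ℝ c)ᵀ * Q * membershipMatrix ℝ c) *ᵥ β =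
      (membershipMatrix ℝ c)ᵀ *ᵥ (Q *ᵥ y))
    (k : κ) : |β k| ≤ M / ξ := by
  obtain ⟨k₀, -, hmax⟩ := exists_max_image univ (fun l => |β l|) ⟨k, mem_univ k⟩
  set S := univ.filter (c · = k₀)
  have hS : (0 : ℝ) < #S := by
    obtain ⟨i, hi⟩ := hc k₀
    exact_mod_cast card_pos.2 ⟨i, mem_filter.2 ⟨mem_univ i, hi⟩⟩
  have hfiber : ∑ i ∈ S, (Q *ᵥ (β ∘ c)) i = ∑ i ∈ S, (Q *ᵥ y) i := by
    have := congrFun hnormal k₀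
    rwa [← mulVec_mulVec, ← mulVec_mulVec, membershipMatrix_mulVec,
      membershipMatrix_transpose_mulVec_apply, membershipMatrix_transpose_mulVec_apply] at this
  have hlower (i) (hi : i ∈ S) : ξ * β k₀ ^ 2 ≤ β k₀ * (Q *ᵥ (β ∘ c)) i := by
    have hci : c i = k₀ := (mem_filter.1 hi).2
    simpa [hci] using mul_mulVec_apply_ge_of_diag_dominant (hdd i) (v := β ∘ c)
      fun j => by simpa [hci] using hmax (c j) (mem_univ _)
  have hupper (i) : β k₀ * (Q *ᵥ y) i ≤ |β k₀| * M := by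
    refine (le_abs_self _).trans ?_
    rw [abs_mul]
    gcongr
    exact (abs_mulVec_apply_le_sum_abs Q hy i).trans (hM i)
  have hsq : #S * (ξ * |β k₀| ^ 2) ≤ #S * (|β k₀| * M) := by
    calc #S * (ξ * |β k₀| ^ 2) = ∑ i ∈ S, ξ * β k₀ ^ 2 := by simp
      _ ≤ ∑ i ∈ S, β k₀ * (Q *ᵥ (β ∘ c)) i := sum_le_sum hlower
      _ = ∑ i ∈ S, β k₀ * (Q *ᵥ y) i := by rw [← mul_sum, ← mul_sum, hfiber]
      _ ≤ ∑ i ∈ S, |β k₀| * M := sum_le_sum fun i _ => hupper i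
      _ = #S * (|β k₀| * M) := by simp
  have hM₀ : 0 ≤ M := (sum_nonneg fun j _ => abs_nonneg _).trans (hM (hc k).choose)
  have hk₀ : ξ * |β k₀| ≤ M := by nlinarith [le_of_mul_le_mul_left hsq hS]
  calc |β k| ≤ |β k₀| := hmax k (mem_univ k)
    _ ≤ M / ξ := by rw [le_div_iff₀ hξ]; linarith

theorem gls_estimate_uniform_bound (n K : ℕ) [NeZero n]
    (Q : Matrix (Fin n) (Fin n) ℝ) (hpd : Q.PosDef)
    (ξ : ℝ) (hξ : 0 < ξ)
    (hdd : ∀ i, ξ ≤ Q i i - ∑ j ∈ Finset.univ.erase i, |Q i j|)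
    (Z : Matrix (Fin n) (Fin K) ℝ)
    (hZ01 : ∀ i k, Z i k = 0 ∨ Z i k = 1)
    (hrow : ∀ i, ∃! k, Z i k = 1)
    (hcol : ∀ k, ∃ i, Z i k = 1)
    (y : Fin n → ℝ) (hy : ∀ i, y i ∈ Set.Icc (0 : ℝ) 1)
    (β : Fin K → ℝ)
    (hβ : β = (Z.transpose * Q * Z)⁻¹.mulVec (Z.transpose.mulVec (Q.mulVec y))) :
    ∀ k, |β k| ≤ (Finset.univ.sup' Finset.univ_nonempty
      (fun i => ∑ j, |Q i j|)) / ξ := by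
  obtain ⟨c, rfl⟩ := exists_eq_membershipMatrix hZ01 hrow
  have hc : Function.Surjective c := fun k =>
    (hcol k).imp fun i hi => by_contra fun h => by simp [membershipMatrix, h] at hi
  have hA : IsUnit ((membershipMatrix ℝ c)ᵀ * Q * membershipMatrix ℝ c).det := by
    have hpos := hpd.conjTranspose_mul_mul_same (membershipMatrix_mulVec_injective hc)
    rw [conjTranspose_eq_transpose_of_trivial] at hpos
    exact (isUnit_iff_isUnit_det _).1 hpos.isUnit
  refine abs_le_div_of_membershipMatrix_normal_eq hξ hdd
    (fun i => le_sup' (fun i => ∑ j, |Q i j|) (mem_univ i)) hc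
    (fun i => (abs_of_nonneg (hy i).1).trans_le (hy i).2) ?_
  rw [hβ, mulVec_mulVec, mul_nonsing_inv _ hA, one_mulVec]
end
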